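/- arXiv:2409.16251 — 2 statements merged into one kernel-verified Lean document; each statement's English description precedes it below -/
import Mathlib

section
/- Let A, B, C, D be (small) sets of surreal numbers such that every element of A is less than every element of B, every element of C is less than every element of D, and the cuts (A|B) := {x : ∀a∈A, a<x and ∀b∈B, x<b} and (C|D) := {y : ∀c∈C, c<y and ∀d∈D, y<d} are disjoint. Then every element of (A|B) is less than every element of (C|D) if and only if there exist b ∈ B and c ∈ C with b ≤ c. -/
universe u

namespace SetTheory

/-- Conway's pre-games (as in the older Mathlib, `SetTheory.PGame`, which is gone now). -/
inductive PGame : Type (u + 1)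
  | mk : ∀ α β : Type u, (α → PGame) → (β → PGame) → PGame

namespace PGame

/-- Left options. -/
def moveLeft : (x : PGame.{u}) → (match x with | mk l _ _ _ => l) → PGame.{u}
  | mk _ _ L _ => L

/-- Right options. -/
def moveRight : (x : PGame.{u}) → (match x with | mk _ r _ _ => r) → PGame.{u}
  | mk _ _ _ R => R

/-- The pair (`x ≤ y`, `x ⧏ y`) defined by Conway's simultaneous recursion. -/
noncomputable def leLF : PGame.{u} → PGame.{u} → Prop × Prop :=
  PGame.rec (motive := fun _ => PGame.{u} → Prop × Prop)
    (fun xl xr xL xR IHL IHR => fun y =>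
      PGame.rec (motive := fun _ => Prop × Prop)
        (fun yl yr yL yR JL JR =>
          ((∀ i, (IHL i (mk yl yr yL yR)).2) ∧ ∀ j, (JR j).2,
            (∃ i, (JL i).1) ∨ ∃ j, (IHR j (mk yl yr yL yR)).1)) y)

/-- `x ≤ y` for pre-games. -/
def le (x y : PGame.{u}) : Prop := (leLF x y).1

/-- `x ⧏ y` for pre-games. -/
def lf (x y : PGame.{u}) : Prop := (leLF x y).2

/-- `x < y` for pre-games (the preorder's strict relation). -/
def lt (x y : PGame.{u}) : Prop := le x y ∧ ¬ le y x

theorem le_def {x y : PGame.{u}} :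
    le x y ↔ (∀ i, lf (x.moveLeft i) y) ∧ ∀ j, lf x (y.moveRight j) := by
  cases x; cases y; exact Iff.rfl

theorem lf_def {x y : PGame.{u}} :
    lf x y ↔ (∃ i, le x (y.moveLeft i)) ∨ ∃ j, le (x.moveRight j) y := by
  cases x; cases y; exact Iff.rfl

theorem le_refl' (x : PGame.{u}) : le x x := by
  induction x with
  | mk xl xr xL xR ihl ihr =>
    exact le_def.2 ⟨fun i => lf_def.2 (Or.inl ⟨i, ihl i⟩),
      fun j => lf_def.2 (Or.inr ⟨j, ihr j⟩)⟩

theorem le_trans_aux (x y z : PGame.{u}) :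
    (le x y → le y z → le x z) ∧ (le x y → lf y z → lf x z) ∧
      (lf x y → le y z → lf x z) := by
  induction x generalizing y z with
  | mk xl xr xL xR ihxl ihxr =>
  induction y generalizing z with
  | mk yl yr yL yR ihyl ihyr =>
  induction z with
  | mk zl zr zL zR ihzl ihzr =>
  refine ⟨?_, ?_, ?_⟩
  · intro hxy hyz
    exact le_def.2 ⟨fun i => (ihxl i _ _).2.2 ((le_def.1 hxy).1 i) hyz,
      fun j => (ihzr j).2.1 hxy ((le_def.1 hyz).2 j)⟩
  · intro hxy hyz
    rcases lf_def.1 hyz with ⟨i, h⟩ | ⟨j, h⟩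
    · exact lf_def.2 (Or.inl ⟨i, (ihzl i).1 hxy h⟩)
    · exact (ihyr j _).2.2 ((le_def.1 hxy).2 j) h
  · intro hxy hyz
    rcases lf_def.1 hxy with ⟨i, h⟩ | ⟨j, h⟩
    · exact (ihyl i _).2.1 h ((le_def.1 hyz).1 i)
    · exact lf_def.2 (Or.inr ⟨j, (ihxr j _ _).1 h hyz⟩)

theorem le_trans' {x y z : PGame.{u}} (h₁ : le x y) (h₂ : le y z) : le x z :=
  (le_trans_aux x y z).1 h₁ h₂

/-- Numeric pre-games. -/
def Numeric : PGame.{u} → Prop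
  | mk _ _ L R => (∀ i j, lt (L i) (R j)) ∧ (∀ i, Numeric (L i)) ∧ ∀ j, Numeric (R j)

/-- Equivalence of numeric pre-games. -/
instance numSetoid : Setoid {x : PGame.{u} // x.Numeric} :=
  ⟨fun x y => le x.1 y.1 ∧ le y.1 x.1,
    ⟨fun x => ⟨le_refl' _, le_refl' _⟩, fun h => ⟨h.2, h.1⟩,
      fun h₁ h₂ => ⟨le_trans' h₁.1 h₂.1, le_trans' h₂.2 h₁.2⟩⟩⟩

end PGame

end SetTheory

/-- Surreal numbers: numeric pre-games up to equivalence (as in the older Mathlib). -/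
def Surreal : Type (u + 1) := Quotient SetTheory.PGame.numSetoid.{u}

namespace Surreal

open SetTheory.PGame in
instance : LE Surreal.{u} :=
  ⟨Quotient.lift₂ (s₁ := numSetoid) (s₂ := numSetoid) (fun x y => le x.1 y.1)
    (fun _ _ _ _ ha hb => propext ⟨fun h => le_trans' (le_trans' ha.2 h) hb.1,
      fun h => le_trans' (le_trans' ha.1 h) hb.2⟩)⟩

open SetTheory.PGame in
instance : LT Surreal.{u} :=
  ⟨Quotient.lift₂ (s₁ := numSetoid) (s₂ := numSetoid) (fun x y => lt x.1 y.1)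
    (fun _ _ _ _ ha hb => propext
      ⟨fun h => ⟨le_trans' (le_trans' ha.2 h.1) hb.1,
          fun h' => h.2 (le_trans' (le_trans' hb.1 h') ha.2)⟩,
        fun h => ⟨le_trans' (le_trans' ha.1 h.1) hb.2,
          fun h' => h.2 (le_trans' (le_trans' hb.2 h') ha.1)⟩⟩)⟩

end Surreal

/-!
If every element of `C` were below every element of `B`, then, since `x < y` for some
`x ∈ (A|B)` and `y ∈ (C|D)`, we would have `A ∪ C < B ∪ D`, and Conway's game
`{A ∪ C | B ∪ D}` would be a surreal in `(A ∪ C | B ∪ D) = (A|B) ∩ (C|D)`. The converse is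
transitivity. Linearity of the order comes from the fact that on numeric games `x ⧏ y`
already forces `x ≤ y`.
-/

namespace SetTheory.PGame

/-- Both orientations at once, so that the induction hypothesis applies to swapped arguments. -/
private theorem lf_iff_not_le_aux (x y : PGame.{u}) :
    (lf x y ↔ ¬ le y x) ∧ (lf y x ↔ ¬ le x y) := by
  induction x generalizing y with
  | mk xl xr xL xR ihxl ihxr =>
  induction y with
  | mk yl yr yL yR ihyl ihyr =>
  constructor
  · rw [lf_def, le_def]
    simp only [not_and_or, not_forall]
    exact or_congr (exists_congr fun i => ((ihyl i).2.not.trans not_not).symm)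
      (exists_congr fun j => ((ihxr j _).2.not.trans not_not).symm)
  · rw [lf_def, le_def]
    simp only [not_and_or, not_forall]
    exact or_congr (exists_congr fun i => ((ihxl i _).1.not.trans not_not).symm)
      (exists_congr fun j => ((ihyr j).1.not.trans not_not).symm)

theorem lf_iff_not_le {x y : PGame.{u}} : lf x y ↔ ¬ le y x :=
  (lf_iff_not_le_aux x y).1

theorem lf_of_lt {x y : PGame.{u}} (h : lt x y) : lf x y :=
  lf_iff_not_le.2 h.2

theorem le_lf_trans {x y z : PGame.{u}} (h₁ : le x y) (h₂ : lf y z) : lf x z :=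
  (le_trans_aux x y z).2.1 h₁ h₂

theorem lf_le_trans {x y z : PGame.{u}} (h₁ : lf x y) (h₂ : le y z) : lf x z :=
  (le_trans_aux x y z).2.2 h₁ h₂

theorem moveLeft_lf (x : PGame.{u}) (i) : lf (x.moveLeft i) x := by
  cases x
  exact lf_def.2 (.inl ⟨i, le_refl' _⟩)

theorem lf_moveRight (x : PGame.{u}) (j) : lf x (x.moveRight j) := by
  cases x
  exact lf_def.2 (.inr ⟨j, le_refl' _⟩)

namespace Numeric

variable {x y : PGame.{u}}

theorem moveLeft (hx : x.Numeric) (i) : (x.moveLeft i).Numeric := by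
  cases x
  exact hx.2.1 i

theorem moveRight (hx : x.Numeric) (j) : (x.moveRight j).Numeric := by
  cases x
  exact hx.2.2 j

theorem lf_moveLeft_moveRight (hx : x.Numeric) (i j) : lf (x.moveLeft i) (x.moveRight j) := by
  cases x
  exact lf_of_lt (hx.1 i j)

theorem moveLeft_le (hx : x.Numeric) (i) : le (x.moveLeft i) x := by
  induction x with
  | mk xl xr xL xR ihl _ =>
  exact le_def.2
    ⟨fun k => le_lf_trans (ihl i (hx.moveLeft i) k) (moveLeft_lf (mk xl xr xL xR) i),
      hx.lf_moveLeft_moveRight i⟩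

theorem le_moveRight (hx : x.Numeric) (j) : le x (x.moveRight j) := by
  induction x with
  | mk xl xr xL xR _ ihr =>
  exact le_def.2
    ⟨fun i => hx.lf_moveLeft_moveRight i j,
      fun k => lf_le_trans (lf_moveRight (mk xl xr xL xR) j) (ihr j (hx.moveRight j) k)⟩

theorem moveLeft_lt (hx : x.Numeric) (i) : lt (x.moveLeft i) x :=
  ⟨hx.moveLeft_le i, lf_iff_not_le.1 (moveLeft_lf x i)⟩

theorem lt_moveRight (hx : x.Numeric) (j) : lt x (x.moveRight j) :=
  ⟨hx.le_moveRight j, lf_iff_not_le.1 (lf_moveRight x j)⟩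

theorem le_of_lf (hx : x.Numeric) (hy : y.Numeric) (h : lf x y) : le x y := by
  cases x; cases y
  rcases lf_def.1 h with ⟨i, hi⟩ | ⟨j, hj⟩
  · exact le_trans' hi (hy.moveLeft_le i)
  · exact le_trans' (hx.le_moveRight j) hj

end Numeric

end SetTheory.PGame

namespace Surreal

open SetTheory PGame

def mk (x : PGame.{u}) (hx : x.Numeric) : Surreal.{u} :=
  Quotient.mk numSetoid ⟨x, hx⟩

theorem mk_out (s : Surreal.{u}) : mk s.out.1 s.out.2 = s :=
  Quotient.out_eq s

theorem mk_lt_mk {x y : PGame.{u}} {hx : x.Numeric} {hy : y.Numeric} :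
    mk x hx < mk y hy ↔ lt x y :=
  Iff.rfl

noncomputable instance : LinearOrder Surreal.{u} where
  le_refl a := Quotient.inductionOn a fun x => le_refl' x.1
  le_trans a b c := Quotient.inductionOn₃ a b c fun _ _ _ => le_trans'
  lt_iff_le_not_ge a b := Quotient.inductionOn₂ a b fun _ _ => Iff.rfl
  le_antisymm a b :=
    Quotient.inductionOn₂ a b fun _ _ h₁ h₂ => Quotient.sound ⟨h₁, h₂⟩
  le_total a b := Quotient.inductionOn₂ a b fun x y =>
    or_iff_not_imp_left.2 fun h => y.2.le_of_lf x.2 (lf_iff_not_le.2 h)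
  toDecidableLE := Classical.decRel _

def cut (L R : Set Surreal.{u}) : Set Surreal.{u} :=
  {x | (∀ l ∈ L, l < x) ∧ ∀ r ∈ R, x < r}

theorem cut_union_union (A B C D : Set Surreal.{u}) :
    cut (A ∪ C) (B ∪ D) = cut A B ∩ cut C D := by
  ext x
  simp only [cut, Set.mem_ofPred_eq, Set.mem_inter_iff, Set.mem_union, or_imp,
    forall_and]
  tauto

noncomputable def cutGame (L R : Set Surreal.{u}) [Small.{u} L] [Small.{u} R] : PGame.{u} :=
  .mk (Shrink.{u} L) (Shrink.{u} R) (fun i => ((equivShrink L).symm i).1.out.1)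
    (fun j => ((equivShrink R).symm j).1.out.1)

variable {L R : Set Surreal.{u}} [Small.{u} L] [Small.{u} R]

theorem cutGame_moveLeft {l : Surreal.{u}} (hl : l ∈ L) :
    (cutGame L R).moveLeft (equivShrink L ⟨l, hl⟩) = l.out.1 := by
  simp [cutGame, moveLeft]

theorem cutGame_moveRight {r : Surreal.{u}} (hr : r ∈ R) :
    (cutGame L R).moveRight (equivShrink R ⟨r, hr⟩) = r.out.1 := by
  simp [cutGame, moveRight]

theorem numeric_cutGame (h : ∀ l ∈ L, ∀ r ∈ R, l < r) : (cutGame L R).Numeric := by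
  refine ⟨fun i j => ?_, fun i => ((equivShrink L).symm i).1.out.2,
    fun j => ((equivShrink R).symm j).1.out.2⟩
  have := h _ ((equivShrink L).symm i).2 _ ((equivShrink R).symm j).2
  rwa [← mk_out ((equivShrink L).symm i).1, ← mk_out ((equivShrink R).symm j).1] at this

theorem cut_nonempty (h : ∀ l ∈ L, ∀ r ∈ R, l < r) : (cut L R).Nonempty := by
  have hx := numeric_cutGame h
  refine ⟨mk _ hx, fun l hl => ?_, fun r hr => ?_⟩
  · rw [← mk_out l, mk_lt_mk, ← cutGame_moveLeft (R := R) hl]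
    exact hx.moveLeft_lt _
  · rw [← mk_out r, mk_lt_mk, ← cutGame_moveRight (L := L) hr]
    exact hx.lt_moveRight _

end Surreal

/-- Lemma 2.1 of the paper: for small sets `A, B, C, D` of surreal numbers with `A < B`,
`C < D` and `(A|B) ∩ (C|D) = ∅`, we have `(A|B) < (C|D)` if and only if there are
`b ∈ B` and `c ∈ C` with `b ≤ c`. -/
theorem cut_lt_cut_iff (A B C D : Set Surreal.{u})
    [Small.{u} A] [Small.{u} B] [Small.{u} C] [Small.{u} D]
    (hAB : ∀ a ∈ A, ∀ b ∈ B, a < b)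
    (hCD : ∀ c ∈ C, ∀ d ∈ D, c < d)
    (hdisj : {x : Surreal | (∀ a ∈ A, a < x) ∧ ∀ b ∈ B, x < b} ∩
        {y : Surreal | (∀ c ∈ C, c < y) ∧ ∀ d ∈ D, y < d} = ∅) :
    (∀ x ∈ {x : Surreal | (∀ a ∈ A, a < x) ∧ ∀ b ∈ B, x < b},
      ∀ y ∈ {y : Surreal | (∀ c ∈ C, c < y) ∧ ∀ d ∈ D, y < d}, x < y) ↔
      ∃ b ∈ B, ∃ c ∈ C, b ≤ c := by
  change Surreal.cut A B ∩ Surreal.cut C D = ∅ at hdisj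
  change (∀ x ∈ Surreal.cut A B, ∀ y ∈ Surreal.cut C D, x < y) ↔ _
  constructor
  · intro hlt
    by_contra! hCB
    obtain ⟨x, hx⟩ := Surreal.cut_nonempty hAB
    obtain ⟨y, hy⟩ := Surreal.cut_nonempty hCD
    have hsep : ∀ l ∈ A ∪ C, ∀ r ∈ B ∪ D, l < r := by
      rintro l (hl | hl) r (hr | hr)
      · exact hAB l hl r hr
      · exact (hx.1 l hl).trans ((hlt x hx y hy).trans (hy.2 r hr))
      · exact hCB r hr l hl
      · exact hCD l hl r hr
    exact (Surreal.cut_nonempty hsep).ne_empty (by rw [Surreal.cut_union_union, hdisj])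
  · rintro ⟨b, hb, c, hc, hbc⟩ x hx y hy
    exact (hx.2 b hb).trans_le (hbc.trans (hy.1 c hc).le)
end

section
/- On the Hahn field 𝕊 = ℝ[[𝔐]], the truncation relation ⊴ is a partial order (reflexive, antisymmetric, transitive) which is well-founded and has the zero series as its minimum element. -/
/-!
On its support `g` agrees with `f`, and `f - g` lives strictly below `supp g`; the two supports
are therefore disjoint, which gives antisymmetry, and transitivity follows by splitting
`h - f = (h - g) + (g - f)`. In a strictly descending chain `F 0 ⊳ F 1 ⊳ ⋯` pick
`m n ∈ supp (F n - F (n + 1))`: these monomials lie in `supp (F 0)` and strictly increase in `𝔐`,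
which contradicts the well-basedness of `supp (F 0)`.
-/

variable {M : Type*} [CommGroup M] [LinearOrder M] [IsOrderedMonoid M]

/-- In the Hahn field `𝕊 = ℝ[[𝔐]]` (realized as Hahn series over `ℝ` with exponents in the
order dual of the monomial group `𝔐`, so that supports are well-based), the series `g` is a
*truncation* of `f`, written `g ⊴ f`, if every element of `supp (f - g)` is strictly smaller
(in the ordering of `𝔐`) than every element of `supp g`. -/
def IsTruncation (g f : HahnSeries Mᵒᵈ ℝ) : Prop :=
  ∀ m ∈ (f - g).support, ∀ n ∈ g.support,
    OrderDual.ofDual m < OrderDual.ofDual n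

section

omit [CommGroup M] [IsOrderedMonoid M]

theorem isTruncation_refl (f : HahnSeries Mᵒᵈ ℝ) : IsTruncation f f := by
  intro m hm
  simp at hm

theorem isTruncation_zero (f : HahnSeries Mᵒᵈ ℝ) : IsTruncation 0 f := by
  intro m _ n hn
  simp at hn

namespace IsTruncation

variable {f g h : HahnSeries Mᵒᵈ ℝ}

theorem disjoint_support (hgf : IsTruncation g f) : Disjoint (f - g).support g.support :=
  Set.disjoint_left.mpr fun m hm hmg => lt_irrefl _ (hgf m hm m hmg)

theorem coeff_eq_of_mem_support (hgf : IsTruncation g f) {n : Mᵒᵈ} (hn : n ∈ g.support) :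
    f.coeff n = g.coeff n := by
  have : n ∉ (f - g).support := Set.disjoint_right.mp hgf.disjoint_support hn
  simpa [sub_eq_zero] using this

theorem support_subset (hgf : IsTruncation g f) : g.support ⊆ f.support := fun n hn => by
  rwa [HahnSeries.mem_support, hgf.coeff_eq_of_mem_support hn]

theorem support_sub_subset (hgf : IsTruncation g f) : (f - g).support ⊆ f.support :=
  fun m hm => by
    have hg : g.coeff m = 0 := by simpa using Set.disjoint_left.mp hgf.disjoint_support hm
    simpa [hg] using hm

theorem antisymm (hfg : IsTruncation f g) (hgf : IsTruncation g f) : f = g := by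
  by_contra hne
  obtain ⟨m, hm⟩ := HahnSeries.support_nonempty_iff.mpr (sub_ne_zero.mpr (Ne.symm hne))
  have hm' : m ∈ (f - g).support := by rwa [← neg_sub, HahnSeries.support_neg]
  exact Set.disjoint_left.mp hgf.disjoint_support hm' (hfg.support_sub_subset hm)

theorem trans (hfg : IsTruncation f g) (hgh : IsTruncation g h) : IsTruncation f h := by
  intro m hm n hn
  rw [← sub_add_sub_cancel h g f] at hm
  rcases HahnSeries.support_add_subset _ _ hm with hm | hm
  · exact hgh m hm n (hfg.support_subset hn)
  · exact hfg m hm n hn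

theorem exists_mem_support_gt (hgf : IsTruncation g f) (hne : g ≠ f) :
    ∃ m ∈ f.support, ∀ n ∈ g.support, n < m := by
  obtain ⟨m, hm⟩ := HahnSeries.support_nonempty_iff.mpr (sub_ne_zero.mpr hne.symm)
  exact ⟨m, hgf.support_sub_subset hm, fun n hn => hgf m hm n hn⟩

end IsTruncation

theorem wellFounded_isTruncation_and_ne :
    WellFounded (fun g f : HahnSeries Mᵒᵈ ℝ => IsTruncation g f ∧ g ≠ f) := by
  refine wellFounded_iff_isEmpty_descending_chain.mpr ⟨fun ⟨F, hF⟩ => ?_⟩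
  choose m hm hm_gt using fun n => (hF n).1.exists_mem_support_gt (hF n).2
  have hF_anti : Antitone fun n => (F n).support :=
    antitone_nat_of_succ_le fun n => (hF n).1.support_subset
  have hm_anti : StrictAnti m := strictAnti_nat_of_succ_lt fun n => hm_gt n _ (hm (n + 1))
  exact Set.isWF_iff_no_descending_seq.mp (F 0).isPWO_support.isWF m hm_anti
    fun n => hF_anti (Nat.zero_le n) (hm n)

end

/-- The truncation relation `⊴` on `𝕊 = ℝ[[𝔐]]` is a partial order (reflexive,
antisymmetric and transitive), its associated strict order is well-founded, and the zero
series is its minimum. -/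
theorem isTruncation_partialOrder_wellFounded_bot :
    (∀ f : HahnSeries Mᵒᵈ ℝ, IsTruncation f f) ∧
    (∀ f g : HahnSeries Mᵒᵈ ℝ, IsTruncation f g → IsTruncation g f → f = g) ∧
    (∀ f g h : HahnSeries Mᵒᵈ ℝ, IsTruncation f g → IsTruncation g h → IsTruncation f h) ∧
    WellFounded (fun g f : HahnSeries Mᵒᵈ ℝ => IsTruncation g f ∧ g ≠ f) ∧
    (∀ f : HahnSeries Mᵒᵈ ℝ, IsTruncation 0 f) :=
  ⟨isTruncation_refl, fun _ _ => IsTruncation.antisymm, fun _ _ _ => IsTruncation.trans,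
    wellFounded_isTruncation_and_ne, isTruncation_zero⟩
end
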